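/- arXiv:1301.6788 — 5 statements merged into one kernel-verified Lean document; each statement's English description precedes it below -/
import Mathlib

section
/- Let η, θ, α be equivalence relations on a set X such that η ∘ θ = θ ∘ η and θ ≤ α ≤ η ∨ θ. Then α ∧ η permutes with θ, i.e., (α ∧ η) ∘ θ = θ ∘ (α ∧ η). -/
/-! Given `x (α ⊓ η) y θ z`, permutability of `η` and `θ` yields `w` with `x θ w η z`; since
`θ ≤ α`, also `w α x α y α z`, so `x θ w (α ⊓ η) z`. This gives `(α ⊓ η) ∘ θ ≤ θ ∘ (α ⊓ η)`, and
taking converses of two symmetric relations turns the inclusion around. -/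

namespace Relation

variable {X : Type*} {r s : X → X → Prop} [Std.Symm r] [Std.Symm s]

theorem flip_comp_of_symm : flip (Comp r s) = Comp s r := by
  rw [flip_comp, Std.Symm.flip_eq, Std.Symm.flip_eq]

theorem comp_eq_comp_of_le (h : Comp r s ≤ Comp s r) : Comp r s = Comp s r := by
  refine le_antisymm h ?_
  calc Comp s r = flip (Comp r s) := flip_comp_of_symm.symm
    _ ≤ flip (Comp s r) := fun x y => h y x
    _ = Comp r s := flip_comp_of_symm

end Relation

namespace Setoid

variable {X : Type*} {η θ α : Setoid X}

theorem comp_inf_le_comp_inf (hperm : Relation.Comp η.r θ.r = Relation.Comp θ.r η.r)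
    (hθα : θ ≤ α) : Relation.Comp (α ⊓ η).r θ.r ≤ Relation.Comp θ.r (α ⊓ η).r := by
  rintro x z ⟨y, ⟨hαxy, hηxy⟩, hθyz⟩
  obtain ⟨w, hθxw, hηwz⟩ : Relation.Comp θ.r η.r x z := hperm ▸ ⟨y, hηxy, hθyz⟩
  have hαwz : α w z := α.trans (α.symm (hθα hθxw)) (α.trans hαxy (hθα hθyz))
  exact ⟨w, hθxw, hαwz, hηwz⟩

end Setoid

theorem inf_permutes_general (X : Type*) (η θ α : Setoid X)
    (hperm : Relation.Comp η.r θ.r = Relation.Comp θ.r η.r)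
    (h1 : θ ≤ α) :
    Relation.Comp (α ⊓ η).r θ.r = Relation.Comp θ.r (α ⊓ η).r :=
  Relation.comp_eq_comp_of_le (Setoid.comp_inf_le_comp_inf hperm h1)

/-- If `η ∘ θ = θ ∘ η` and `θ ≤ α ≤ η ⊔ θ`, then `α ⊓ η` permutes with `θ`. -/
theorem inf_permutes (X : Type*) (η θ α : Setoid X)
    (hperm : Relation.Comp η.r θ.r = Relation.Comp θ.r η.r)
    (h1 : θ ≤ α) (h2 : α ≤ η ⊔ θ) :
    Relation.Comp (α ⊓ η).r θ.r = Relation.Comp θ.r (α ⊓ η).r :=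
  inf_permutes_general X η θ α hperm h1
end

section
/- Let η, θ, α be equivalence relations on a set X such that η ∘ θ = θ ∘ η, η ∧ θ ≤ α ≤ η, and α ∘ θ = θ ∘ α. Then ((α ∘ θ) ∧ η) = α, i.e., (α ∨ θ) ∧ η = α. -/
/-!
When `α` and `θ` permute, the relational product `α ∘ θ` is already an equivalence relation,
hence equals `α ⊔ θ`. If `x (α ∘ θ) y` through `z` and `x η y`, then `z η x η y` because `α ≤ η`,
so `z (η ⊓ θ) y` and therefore `z α y`; thus `x α y`.
-/

namespace Setoid

variable {X : Type*}

theorem equivalence_comp_of_comp_comm {α θ : Setoid X}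
    (h : Relation.Comp α.r θ.r = Relation.Comp θ.r α.r) :
    Equivalence (Relation.Comp α.r θ.r) where
  refl x := ⟨x, α.refl' x, θ.refl' x⟩
  symm := by
    rintro x y ⟨z, hxz, hzy⟩
    rw [h]
    exact ⟨z, θ.symm' hzy, α.symm' hxz⟩
  trans := by
    rintro x y w ⟨a, hxa, hay⟩ ⟨b, hyb, hbw⟩
    obtain ⟨u, hau, hub⟩ : Relation.Comp α.r θ.r a b := h ▸ ⟨y, hay, hyb⟩
    exact ⟨u, α.trans' hxa hau, θ.trans' hub hbw⟩

theorem sup_r_eq_comp_of_comp_comm {α θ : Setoid X}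
    (h : Relation.Comp α.r θ.r = Relation.Comp θ.r α.r) :
    (α ⊔ θ).r = Relation.Comp α.r θ.r := by
  let c : Setoid X := ⟨_, equivalence_comp_of_comp_comm h⟩
  have hsup : α ⊔ θ ≤ c :=
    sup_le (fun x y h => ⟨y, h, θ.refl' y⟩) fun x y h => ⟨x, α.refl' x, h⟩
  refine le_antisymm (fun x y hxy => hsup hxy) fun x y ⟨z, hxz, hzy⟩ => ?_
  exact (α ⊔ θ).trans' (le_sup_left (a := α) (b := θ) hxz) (le_sup_right (a := α) hzy)

theorem rel_of_comp_of_inf_le_of_le {η θ α : Setoid X} (h1 : η ⊓ θ ≤ α) (h2 : α ≤ η) {x y : X}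
    (hxy : Relation.Comp α.r θ.r x y) (hη : η.r x y) : α.r x y := by
  obtain ⟨z, hxz, hzy⟩ := hxy
  have hzy' : (η ⊓ θ).r z y := ⟨η.trans' (η.symm' (h2 hxz)) hη, hzy⟩
  exact α.trans' hxz (h1 hzy')

end Setoid

theorem comp_inf_eq_general (X : Type*) (η θ α : Setoid X)
    (h1 : η ⊓ θ ≤ α) (h2 : α ≤ η)
    (haperm : Relation.Comp α.r θ.r = Relation.Comp θ.r α.r) :
    ((fun x y => Relation.Comp α.r θ.r x y ∧ η.r x y) = α.r) ∧
      (α ⊔ θ) ⊓ η = α := by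
  constructor
  · funext x y
    exact propext ⟨fun ⟨h, hη⟩ => Setoid.rel_of_comp_of_inf_le_of_le h1 h2 h hη,
      fun h => ⟨⟨y, h, θ.refl' y⟩, h2 h⟩⟩
  · refine le_antisymm (fun x y ⟨hsup, hη⟩ => ?_) (le_inf le_sup_left h2)
    rw [Setoid.sup_r_eq_comp_of_comp_comm haperm] at hsup
    exact Setoid.rel_of_comp_of_inf_le_of_le h1 h2 hsup hη

/-- If `η ∘ θ = θ ∘ η`, `η ⊓ θ ≤ α ≤ η`, and `α` permutes with `θ`,
then `(α ∘ θ) ⊓ η = α`, i.e. `(α ⊔ θ) ⊓ η = α`. -/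
theorem comp_inf_eq (X : Type*) (η θ α : Setoid X)
    (hperm : Relation.Comp η.r θ.r = Relation.Comp θ.r η.r)
    (h1 : η ⊓ θ ≤ α) (h2 : α ≤ η)
    (haperm : Relation.Comp α.r θ.r = Relation.Comp θ.r α.r) :
    ((fun x y => Relation.Comp α.r θ.r x y ∧ η.r x y) = α.r) ∧
      (α ⊔ θ) ⊓ η = α :=
  comp_inf_eq_general X η θ α h1 h2 haperm
end

section
/- Let η, θ, α, β be equivalence relations on a set X with η ∧ θ ≤ α ≤ η, η ∧ θ ≤ β ≤ η, α ∘ θ = θ ∘ α, and β ∘ θ = θ ∘ β. Then the join α ∨ β (in the lattice of equivalence relations) also permutes with θ: (α ∨ β) ∘ θ = θ ∘ (α ∨ β). -/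
/-!
The join `α ⊔ β` is the reflexive–transitive closure of `α ∪ β`. Since `α` and `β` permute with
`θ`, a `θ`-step can be pushed to the front past every `α`- or `β`-step of a chain, which gives
`(α ⊔ β) ∘ θ ≤ θ ∘ (α ⊔ β)`; as all relations involved are symmetric, taking converses yields
the reverse inclusion.
-/

open Relation

namespace Relation

variable {X : Type*}

instance {r s : X → X → Prop} [Std.Symm r] [Std.Symm s] : Std.Symm (r ⊔ s) :=
  ⟨fun _ _ h ↦ h.imp (symm ·) (symm ·)⟩

theorem comp_comm_of_le {r s : X → X → Prop} [Std.Symm r] [Std.Symm s]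
    (h : Comp r s ≤ Comp s r) : Comp r s = Comp s r := by
  refine le_antisymm h fun x z ⟨y, hxy, hyz⟩ ↦ ?_
  obtain ⟨w, hzw, hwx⟩ := h z x ⟨y, symm hyz, symm hxy⟩
  exact ⟨w, symm hwx, symm hzw⟩

theorem comp_reflTransGen_le_of_comp_le {r θ : X → X → Prop}
    (h : Comp r θ ≤ Comp θ (ReflTransGen r)) :
    Comp (ReflTransGen r) θ ≤ Comp θ (ReflTransGen r) := by
  rintro x z ⟨y, hxy, hyz⟩
  induction hxy generalizing z with
  | refl => exact ⟨z, hyz, .refl⟩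
  | tail _ hbc ih =>
    obtain ⟨w, hbw, hwz⟩ := h _ _ ⟨_, hbc, hyz⟩
    obtain ⟨v, hxv, hvw⟩ := ih w hbw
    exact ⟨v, hxv, hvw.trans hwz⟩

end Relation

namespace Setoid

variable {X : Type*}

theorem sup_r_eq_reflTransGen (α β : Setoid X) : (α ⊔ β).r = ReflTransGen (α.r ⊔ β.r) := by
  rw [sup_def, ← EqvGen.eqvGen_eq_reflTransGen]
  rfl

theorem comp_sup_le_of_comp_eq {α β θ : Setoid X}
    (hα : Comp α.r θ.r = Comp θ.r α.r) (hβ : Comp β.r θ.r = Comp θ.r β.r) :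
    Comp (α ⊔ β).r θ.r ≤ Comp θ.r (α ⊔ β).r := by
  rw [sup_r_eq_reflTransGen α β]
  refine comp_reflTransGen_le_of_comp_le fun x z ⟨y, hxy, hyz⟩ ↦ ?_
  rcases hxy with hxy | hxy
  · obtain ⟨w, hxw, hwz⟩ : Comp θ.r α.r x z := hα ▸ ⟨y, hxy, hyz⟩
    exact ⟨w, hxw, .single (.inl hwz)⟩
  · obtain ⟨w, hxw, hwz⟩ : Comp θ.r β.r x z := hβ ▸ ⟨y, hxy, hyz⟩
    exact ⟨w, hxw, .single (.inr hwz)⟩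

end Setoid

theorem sup_permutes_general (X : Type*) (θ α β : Setoid X)
    (haperm : Relation.Comp α.r θ.r = Relation.Comp θ.r α.r)
    (hbperm : Relation.Comp β.r θ.r = Relation.Comp θ.r β.r) :
    Relation.Comp (α ⊔ β).r θ.r = Relation.Comp θ.r (α ⊔ β).r :=
  comp_comm_of_le (Setoid.comp_sup_le_of_comp_eq haperm hbperm)

/-- If `η ⊓ θ ≤ α ≤ η`, `η ⊓ θ ≤ β ≤ η`, and both `α` and `β` permute
with `θ`, then the join `α ⊔ β` permutes with `θ`. -/
theorem sup_permutes (X : Type*) (η θ α β : Setoid X)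
    (ha1 : η ⊓ θ ≤ α) (ha2 : α ≤ η) (hb1 : η ⊓ θ ≤ β) (hb2 : β ≤ η)
    (haperm : Relation.Comp α.r θ.r = Relation.Comp θ.r α.r)
    (hbperm : Relation.Comp β.r θ.r = Relation.Comp θ.r β.r) :
    Relation.Comp (α ⊔ β).r θ.r = Relation.Comp θ.r (α ⊔ β).r :=
  sup_permutes_general X θ α β haperm hbperm
end

section
/- Let η, θ, α, β be equivalence relations on a set X with η ∧ θ ≤ α ≤ η, η ∧ θ ≤ β ≤ η, α ∘ θ = θ ∘ α, and β ∘ θ = θ ∘ β. Then the meet α ∧ β (intersection) also permutes with θ: (α ∧ β) ∘ θ = θ ∘ (α ∧ β). -/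
/-! For `x (α ⊓ β) y θ z`, permutability gives `x θ u α z` and `x θ v β z`. Then `u θ v` and,
since `α, β ≤ η`, also `u η v`; so `u β v` because `η ⊓ θ ≤ β`, whence `u (α ⊓ β) z`. This gives
`(α ⊓ β) ∘ θ ≤ θ ∘ (α ⊓ β)`, and for symmetric relations one inclusion between `ρ ∘ θ` and
`θ ∘ ρ` already forces equality, by taking converses. -/

namespace Setoid

open Relation

variable {X : Type*}

theorem comp_eq_comm_of_le {ρ θ : Setoid X} (h : Comp ρ.r θ.r ≤ Comp θ.r ρ.r) :
    Comp ρ.r θ.r = Comp θ.r ρ.r := by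
  refine le_antisymm h fun x z ⟨y, hxy, hyz⟩ => ?_
  obtain ⟨w, hzw, hwx⟩ := h z x ⟨y, ρ.symm hyz, θ.symm hxy⟩
  exact ⟨w, ρ.symm hwx, θ.symm hzw⟩

theorem comp_inf_le_comm {η θ α β : Setoid X} (hα : α ≤ η) (hηθ : η ⊓ θ ≤ β) (hβ : β ≤ η)
    (hαθ : Comp α.r θ.r ≤ Comp θ.r α.r) (hβθ : Comp β.r θ.r ≤ Comp θ.r β.r) :
    Comp (α ⊓ β).r θ.r ≤ Comp θ.r (α ⊓ β).r := by
  rintro x z ⟨y, ⟨hxyα, hxyβ⟩, hyz⟩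
  obtain ⟨u, hxu, huz⟩ := hαθ x z ⟨y, hxyα, hyz⟩
  obtain ⟨v, hxv, hvz⟩ := hβθ x z ⟨y, hxyβ, hyz⟩
  have huvθ : θ.r u v := θ.trans (θ.symm hxu) hxv
  have huvη : η.r u v := η.trans (hα huz) (η.symm (hβ hvz))
  exact ⟨u, hxu, huz, β.trans (hηθ ⟨huvη, huvθ⟩) hvz⟩

end Setoid

theorem inf_permutes'_general (X : Type*) (η θ α β : Setoid X)
    (ha2 : α ≤ η) (hb1 : η ⊓ θ ≤ β) (hb2 : β ≤ η)
    (haperm : Relation.Comp α.r θ.r = Relation.Comp θ.r α.r)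
    (hbperm : Relation.Comp β.r θ.r = Relation.Comp θ.r β.r) :
    Relation.Comp (α ⊓ β).r θ.r = Relation.Comp θ.r (α ⊓ β).r :=
  Setoid.comp_eq_comm_of_le <|
    Setoid.comp_inf_le_comm ha2 hb1 hb2 haperm.le hbperm.le

/-- If `η ⊓ θ ≤ α ≤ η`, `η ⊓ θ ≤ β ≤ η`, and both `α` and `β` permute
with `θ`, then the meet `α ⊓ β` permutes with `θ`. -/
theorem inf_permutes' (X : Type*) (η θ α β : Setoid X)
    (ha1 : η ⊓ θ ≤ α) (ha2 : α ≤ η) (hb1 : η ⊓ θ ≤ β) (hb2 : β ≤ η)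
    (haperm : Relation.Comp α.r θ.r = Relation.Comp θ.r α.r)
    (hbperm : Relation.Comp β.r θ.r = Relation.Comp θ.r β.r) :
    Relation.Comp (α ⊓ β).r θ.r = Relation.Comp θ.r (α ⊓ β).r :=
  inf_permutes'_general X η θ α β ha2 hb1 hb2 haperm hbperm
end

section
/- Let L be a sublattice of the lattice Eq(X) of equivalence relations on a set X, and let η, θ ∈ L with η ∘ θ = θ ∘ η. Then the interval [θ, η ∨ θ] ∩ L is lattice-isomorphic to the set [η ∧ θ, η]_L^θ := {γ ∈ L : η ∧ θ ≤ γ ≤ η, γ ∘ θ = θ ∘ γ}, and moreover [η ∧ θ, η]_L^θ is a sublattice of the interval [η ∧ θ, η] ∩ L (closed under the meet and join of L). -/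
/-!
If `γ` and `θ` permute, then `γ ∘ θ` is already transitive and symmetric, so it is `γ ⊔ θ`.
This gives the modular law `(γ ⊔ θ) ⊓ η = γ ⊔ θ ⊓ η` for `γ ≤ η`. Applied to `γ` itself it
shows `(γ ⊔ θ) ⊓ η = γ` on `[η ⊓ θ, η]`, and applied to the permuting pair `θ, η` it shows
`(α ⊓ η) ⊔ θ = α` on `[θ, η ⊔ θ]`; so `α ↦ α ⊓ η` and `γ ↦ γ ⊔ θ` are inverse monotone maps.
The relations permuting with `θ` are closed under joins because `θ` can be pushed step by step
through a chain of `α`- and `β`-steps, and the interval `[η ⊓ θ, η]` makes them closed under meets.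
-/

open Relation

namespace Setoid

variable {X : Type*}

def Permute (γ θ : Setoid X) : Prop :=
  Relation.Comp γ.r θ.r = Relation.Comp θ.r γ.r

variable {α β γ η θ : Setoid X}

theorem Permute.symm (h : Permute γ θ) : Permute θ γ :=
  Eq.symm h

theorem Permute.exists_of_rel (h : Permute γ θ) {x y z : X} (hxy : γ.r x y) (hyz : θ.r y z) :
    ∃ w, θ.r x w ∧ γ.r w z :=
  Eq.mp (congrFun₂ h x z) ⟨y, hxy, hyz⟩

theorem permute_of_exists_of_rel
    (h : ∀ x y z, γ.r x y → θ.r y z → ∃ w, θ.r x w ∧ γ.r w z) : Permute γ θ := by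
  funext x z
  refine propext ⟨fun ⟨y, hxy, hyz⟩ => h x y z hxy hyz, fun ⟨y, hxy, hyz⟩ => ?_⟩
  -- the converse inclusion is the first one applied to the inverse relations
  obtain ⟨w, hzw, hwx⟩ := h z y x (γ.symm' hyz) (θ.symm' hxy)
  exact ⟨w, γ.symm' hwx, θ.symm' hzw⟩

theorem Permute.sup_iff_comp (h : Permute γ θ) {x z : X} :
    (γ ⊔ θ).r x z ↔ Relation.Comp γ.r θ.r x z := by
  refine ⟨fun hxz => ?_, fun ⟨y, hxy, hyz⟩ =>
    (γ ⊔ θ).trans' (le_sup_left (b := θ) hxy) (le_sup_right (a := γ) hyz)⟩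
  let δ : Setoid X :=
    { r := Relation.Comp γ.r θ.r
      iseqv :=
        { refl := fun a => ⟨a, γ.refl' a, θ.refl' a⟩
          symm := fun ⟨b, hab, hbc⟩ => h.symm.exists_of_rel (θ.symm' hbc) (γ.symm' hab)
          trans := fun ⟨b, hab, hbc⟩ ⟨d, hcd, hde⟩ => by
            obtain ⟨m, hbm, hmd⟩ := h.symm.exists_of_rel hbc hcd
            exact ⟨m, γ.trans' hab hbm, θ.trans' hmd hde⟩ } }
  exact sup_le (c := δ) (fun a b hab => ⟨b, hab, θ.refl' b⟩)
    (fun a b hab => ⟨a, γ.refl' a, hab⟩) hxz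

theorem Permute.sup_inf_assoc_of_le (h : Permute γ θ) (hγη : γ ≤ η) :
    (γ ⊔ θ) ⊓ η = γ ⊔ θ ⊓ η := by
  refine le_antisymm (fun x z ⟨hxz, hη⟩ => ?_)
    (le_inf (sup_le_sup_left inf_le_left γ) (sup_le hγη inf_le_right))
  obtain ⟨y, hxy, hyz⟩ := h.sup_iff_comp.mp hxz
  exact (γ ⊔ θ ⊓ η).trans' (le_sup_left (b := θ ⊓ η) hxy)
    (le_sup_right (a := γ) ⟨hyz, η.trans' (η.symm' (hγη hxy)) hη⟩)

theorem Permute.sup (hα : Permute α θ) (hβ : Permute β θ) : Permute (α ⊔ β) θ := by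
  refine permute_of_exists_of_rel fun x y z hxy hyz => ?_
  have : Std.Symm fun a b => α.r a b ∨ β.r a b := ⟨fun _ _ => Or.imp α.symm' β.symm'⟩
  have hchain : ReflTransGen (fun a b => α.r a b ∨ β.r a b) x y := by
    rw [← EqvGen.eqvGen_eq_reflTransGen]
    rwa [sup_eq_eqvGen] at hxy
  clear hxy
  induction hchain using ReflTransGen.head_induction_on with
  | refl => exact ⟨z, hyz, (α ⊔ β).refl' z⟩
  | head hab _ ih =>
    obtain ⟨w, hbw, hwz⟩ := ih
    obtain ⟨ρ, hρ, hρθ, hab⟩ : ∃ ρ, ρ ≤ α ⊔ β ∧ Permute ρ θ ∧ ρ.r _ _ :=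
      hab.elim (fun h => ⟨α, le_sup_left, hα, h⟩) (fun h => ⟨β, le_sup_right, hβ, h⟩)
    obtain ⟨v, hav, hvw⟩ := hρθ.exists_of_rel hab hbw
    exact ⟨v, hav, (α ⊔ β).trans' (hρ hvw) hwz⟩

theorem Permute.inf (hα : Permute α θ) (hβ : Permute β θ) (hαβ : (α ⊔ β) ⊓ θ ≤ β) :
    Permute (α ⊓ β) θ := by
  refine permute_of_exists_of_rel fun x y z ⟨hxyα, hxyβ⟩ hyz => ?_
  obtain ⟨w₁, hxw₁, hw₁z⟩ := hα.exists_of_rel hxyα hyz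
  obtain ⟨w₂, hxw₂, hw₂z⟩ := hβ.exists_of_rel hxyβ hyz
  have hw₁w₂ : β.r w₁ w₂ := hαβ
    ⟨(α ⊔ β).trans' (le_sup_left (b := β) hw₁z) (le_sup_right (a := α) (β.symm' hw₂z)),
      θ.trans' (θ.symm' hxw₁) hxw₂⟩
  exact ⟨w₁, hxw₁, hw₁z, β.trans' hw₁w₂ hw₂z⟩

theorem Permute.inf_of_le (h : Permute η θ) (hθα : θ ≤ α) : Permute (α ⊓ η) θ := by
  refine permute_of_exists_of_rel fun x y z ⟨hxyα, hxyη⟩ hyz => ?_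
  obtain ⟨v, hxv, hvz⟩ := h.exists_of_rel hxyη hyz
  exact ⟨v, hxv, α.trans' (α.symm' (hθα hxv)) (α.trans' hxyα (hθα hyz)), hvz⟩

/-- The paper's `[η ⊓ θ, η]_L^θ`. -/
def permutingInterval (L : Sublattice (Setoid X)) (η θ : Setoid X) : Sublattice (Setoid X) where
  carrier := {γ | γ ∈ L ∧ η ⊓ θ ≤ γ ∧ γ ≤ η ∧ Permute γ θ}
  supClosed' := fun _ ⟨hαL, hαlo, hαhi, hα⟩ _ ⟨hβL, _, hβhi, hβ⟩ =>
    ⟨L.sup_mem hαL hβL, hαlo.trans le_sup_left, sup_le hαhi hβhi, hα.sup hβ⟩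
  infClosed' := fun _ ⟨hαL, hαlo, hαhi, hα⟩ _ ⟨hβL, hβlo, hβhi, hβ⟩ =>
    ⟨L.inf_mem hαL hβL, le_inf hαlo hβlo, inf_le_left.trans hαhi,
      hα.inf hβ ((inf_le_inf_right θ (sup_le hαhi hβhi)).trans hβlo)⟩

def transposeOrderIso (L : Sublattice (Setoid X)) (hη : η ∈ L) (hθ : θ ∈ L) (h : Permute η θ) :
    {α | α ∈ L ∧ θ ≤ α ∧ α ≤ η ⊔ θ} ≃o permutingInterval L η θ :=
  Equiv.toOrderIso
    { toFun := fun α => ⟨α.1 ⊓ η, L.inf_mem α.2.1 hη,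
        le_inf (inf_le_right.trans α.2.2.1) inf_le_left, inf_le_right, h.inf_of_le α.2.2.1⟩
      invFun := fun γ => ⟨γ.1 ⊔ θ, L.sup_mem γ.2.1 hθ, le_sup_right, sup_le_sup_right γ.2.2.2.1 θ⟩
      left_inv := fun ⟨α, _, hθα, hαηθ⟩ => Subtype.ext <| by
        change α ⊓ η ⊔ θ = α
        rw [sup_comm, inf_comm, ← h.symm.sup_inf_assoc_of_le hθα, sup_comm]
        exact inf_eq_right.2 hαηθ
      right_inv := fun ⟨γ, _, hηθγ, hγη, hγ⟩ => Subtype.ext <| by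
        change (γ ⊔ θ) ⊓ η = γ
        rw [hγ.sup_inf_assoc_of_le hγη, inf_comm]
        exact sup_eq_left.2 hηθγ }
    (fun _ _ hαβ => inf_le_inf_right η (Subtype.coe_le_coe.2 hαβ))
    (fun _ _ hγδ => sup_le_sup_right (Subtype.coe_le_coe.2 hγδ) θ)

end Setoid

/-- Dedekind transposition for a sublattice `L` of `Eq(X)`: if `η, θ ∈ L`
permute, then `[θ, η ⊔ θ]_L` is order (hence lattice) isomorphic to
`[η ⊓ θ, η]_L^θ`, the set of members of `L` between `η ⊓ θ` and `η` that
permute with `θ`, via `α ↦ α ⊓ η` with inverse `γ ↦ γ ∘ θ = γ ⊔ θ`; moreover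
`[η ⊓ θ, η]_L^θ` is closed under the meet and join, i.e. it is a sublattice
of `[η ⊓ θ, η]_L`. -/
theorem transposition_sublattice (X : Type*) (L : Sublattice (Setoid X))
    (η θ : Setoid X) (hη : η ∈ L) (hθ : θ ∈ L)
    (hperm : Relation.Comp η.r θ.r = Relation.Comp θ.r η.r) :
    (∃ e : {α : Setoid X | α ∈ L ∧ θ ≤ α ∧ α ≤ η ⊔ θ} ≃o
           {γ : Setoid X | γ ∈ L ∧ η ⊓ θ ≤ γ ∧ γ ≤ η ∧
             Relation.Comp γ.r θ.r = Relation.Comp θ.r γ.r},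
       (∀ a, (e a : Setoid X) = (a : Setoid X) ⊓ η) ∧
       (∀ b, (e.symm b : Setoid X) = (b : Setoid X) ⊔ θ)) ∧
    (∀ α β : Setoid X,
      α ∈ L → η ⊓ θ ≤ α → α ≤ η →
        Relation.Comp α.r θ.r = Relation.Comp θ.r α.r →
      β ∈ L → η ⊓ θ ≤ β → β ≤ η →
        Relation.Comp β.r θ.r = Relation.Comp θ.r β.r →
      ((α ⊔ β ∈ L ∧ η ⊓ θ ≤ α ⊔ β ∧ α ⊔ β ≤ η ∧
          Relation.Comp (α ⊔ β).r θ.r = Relation.Comp θ.r (α ⊔ β).r) ∧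
       (α ⊓ β ∈ L ∧ η ⊓ θ ≤ α ⊓ β ∧ α ⊓ β ≤ η ∧
          Relation.Comp (α ⊓ β).r θ.r = Relation.Comp θ.r (α ⊓ β).r))) := by
  refine ⟨⟨Setoid.transposeOrderIso L hη hθ hperm, fun _ => rfl, fun _ => rfl⟩, ?_⟩
  intro α β hαL hαlo hαhi hα hβL hβlo hβhi hβ
  have hα' : α ∈ Setoid.permutingInterval L η θ := ⟨hαL, hαlo, hαhi, hα⟩
  have hβ' : β ∈ Setoid.permutingInterval L η θ := ⟨hβL, hβlo, hβhi, hβ⟩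
  exact ⟨Sublattice.sup_mem hα' hβ', Sublattice.inf_mem hα' hβ'⟩
end
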